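/- If G is a graph with γ_g'(G) = 4, then for every edge e of G, γ_g'(G−e) ≥ 3. -/

import Mathlib

open Classical

noncomputable section

namespace DomGame

variable {V : Type*} [Fintype V]

/-- Closed neighborhood of `v` as a `Finset`. -/
noncomputable def N (G : SimpleGraph V) (v : V) : Finset V :=
  Finset.univ.filter (fun u => G.Adj v u ∨ u = v)

/-- Legal moves given the set `S` of already dominated vertices. -/
noncomputable def moves (G : SimpleGraph V) (S : Finset V) : Finset V :=
  Finset.univ.filter (fun v => ¬ N G v ⊆ S)

lemma card_lt {G : SimpleGraph V} {S : Finset V} (v : V) (hv : v ∈ moves G S) :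
    (Finset.univ \ (S ∪ N G v)).card < (Finset.univ \ S).card := by
  simp only [moves, Finset.mem_filter] at hv
  obtain ⟨u, hu, hus⟩ := Finset.not_subset.mp hv.2
  apply Finset.card_lt_card
  refine ⟨Finset.sdiff_subset_sdiff (le_refl _) Finset.subset_union_left, ?_⟩
  intro hsub
  have := hsub (Finset.mem_sdiff.mpr ⟨Finset.mem_univ u, hus⟩)
  rw [Finset.mem_sdiff, Finset.mem_union] at this
  exact this.2 (Or.inr hu)

mutual
/-- Number of moves with optimal play when it is Dominator's turn and
`S` is the set of already dominated vertices. -/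
noncomputable def gameD (G : SimpleGraph V) (S : Finset V) : ℕ :=
  if h : (moves G S).Nonempty then
    1 + (moves G S).attach.inf' (by simpa using h)
      (fun v => gameS G (S ∪ N G v.1))
  else 0
termination_by (Finset.univ \ S).card
decreasing_by exact card_lt v.1 v.2

/-- Number of moves with optimal play when it is Staller's turn. -/
noncomputable def gameS (G : SimpleGraph V) (S : Finset V) : ℕ :=
  if h : (moves G S).Nonempty then
    1 + (moves G S).attach.sup' (by simpa using h)
      (fun v => gameD G (S ∪ N G v.1))
  else 0
termination_by (Finset.univ \ S).card
decreasing_by exact card_lt v.1 v.2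
end

/-- The (Dominator-start) game domination number. -/
noncomputable def gammaG (G : SimpleGraph V) : ℕ := gameD G ∅

/-- The Staller-start game domination number. -/
noncomputable def gammaG' (G : SimpleGraph V) : ℕ := gameS G ∅

end DomGame

/-!
The game ends within two moves after Staller's opening move `v` exactly when Dominator can answer
with some `w` whose closed neighbourhood covers what `N[v]` leaves undominated. So `γ_g' ≤ 2`
says that every `N[v]` is completed to `V` by one more closed neighbourhood, a property that
survives adding edges because closed neighbourhoods only grow. Hence deleting an edge from a graph
with `γ_g' = 4` cannot bring the Staller-start game number down to `2` or less.
-/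

namespace DomGame

variable {V : Type*} [Fintype V]

lemma mem_N_self (G : SimpleGraph V) (v : V) : v ∈ N G v := by
  simp [N]

lemma N_mono {G H : SimpleGraph V} (h : G ≤ H) (v : V) : N G v ⊆ N H v := by
  intro u hu
  simp only [N, Finset.mem_filter, Finset.mem_univ, true_and] at hu ⊢
  exact hu.imp_left (@h v u)

lemma mem_moves_iff {G : SimpleGraph V} {S : Finset V} {v : V} :
    v ∈ moves G S ↔ ¬ N G v ⊆ S := by
  simp [moves]

lemma moves_nonempty_iff {G : SimpleGraph V} {S : Finset V} :
    (moves G S).Nonempty ↔ S ≠ Finset.univ := by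
  constructor
  · rintro ⟨v, hv⟩ rfl
    exact mem_moves_iff.mp hv (Finset.subset_univ _)
  · intro hS
    obtain ⟨u, -, hu⟩ := Finset.exists_of_ssubset (Finset.ssubset_univ_iff.mpr hS)
    exact ⟨u, mem_moves_iff.mpr fun hN => hu (hN (mem_N_self G u))⟩

lemma gameS_eq_zero_iff {G : SimpleGraph V} {S : Finset V} : gameS G S = 0 ↔ S = Finset.univ := by
  rw [gameS]
  split_ifs with h
  · simpa using moves_nonempty_iff.mp h
  · simpa [moves_nonempty_iff] using h

lemma gameD_eq_zero_of_eq_univ (G : SimpleGraph V) : gameD G Finset.univ = 0 := by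
  rw [gameD, dif_neg (by simp [moves_nonempty_iff])]

lemma gameS_le_succ_iff {G : SimpleGraph V} {S : Finset V} (h : (moves G S).Nonempty) (n : ℕ) :
    gameS G S ≤ n + 1 ↔ ∀ v ∈ moves G S, gameD G (S ∪ N G v) ≤ n := by
  rw [gameS, dif_pos h, add_comm, Nat.add_le_add_iff_right, Finset.sup'_le_iff]
  simp

lemma gameD_le_succ_iff {G : SimpleGraph V} {S : Finset V} (h : (moves G S).Nonempty) (n : ℕ) :
    gameD G S ≤ n + 1 ↔ ∃ v ∈ moves G S, gameS G (S ∪ N G v) ≤ n := by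
  rw [gameD, dif_pos h, add_comm, Nat.add_le_add_iff_right, Finset.inf'_le_iff]
  simp

lemma gameD_le_one_iff {G : SimpleGraph V} {S : Finset V} (hS : S ≠ Finset.univ) :
    gameD G S ≤ 1 ↔ ∃ w, S ∪ N G w = Finset.univ := by
  simp only [gameD_le_succ_iff (moves_nonempty_iff.mpr hS), Nat.le_zero, gameS_eq_zero_iff]
  refine ⟨fun ⟨w, _, hw⟩ => ⟨w, hw⟩, fun ⟨w, hw⟩ => ⟨w, mem_moves_iff.mpr fun hN => hS ?_, hw⟩⟩
  rwa [Finset.union_eq_left.mpr hN] at hw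

theorem gammaG'_le_two_iff (G : SimpleGraph V) :
    gammaG' G ≤ 2 ↔ ∀ v, ∃ w, N G v ∪ N G w = Finset.univ := by
  rcases isEmpty_or_nonempty V with hV | ⟨⟨u⟩⟩
  · simp [gammaG', gameS_eq_zero_iff.mpr (Subsingleton.elim _ _)]
  have hmoves : (moves G ∅).Nonempty :=
    moves_nonempty_iff.mpr (Finset.univ_nonempty_iff.mpr ⟨u⟩).ne_empty.symm
  rw [gammaG', gameS_le_succ_iff hmoves]
  refine forall_congr' fun v => ?_
  have hv : ¬ N G v ⊆ ∅ := fun hN => by simpa using hN (mem_N_self G v)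
  simp only [Finset.empty_union, mem_moves_iff, hv, not_false_eq_true, forall_const]
  by_cases hN : N G v = Finset.univ
  · simpa [hN, gameD_eq_zero_of_eq_univ] using ⟨u⟩
  · exact gameD_le_one_iff hN

theorem gammaG'_le_two_of_le {G H : SimpleGraph V} (hGH : G ≤ H) (hG : gammaG' G ≤ 2) :
    gammaG' H ≤ 2 := by
  rw [gammaG'_le_two_iff] at hG ⊢
  intro v
  obtain ⟨w, hw⟩ := hG v
  exact ⟨w, Finset.eq_univ_of_forall fun u =>
    Finset.union_subset_union (N_mono hGH v) (N_mono hGH w) (hw ▸ Finset.mem_univ u)⟩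

end DomGame

open DomGame in
/-- If `γ_g'(G) = 4`, then `γ_g'(G−e) ≥ 3` for every edge `e`. -/
theorem gameS_four_edge_removal {V : Type*} [Fintype V] (G : SimpleGraph V)
    (hG : gammaG' G = 4) (e : Sym2 V) (he : e ∈ G.edgeSet) :
    3 ≤ gammaG' (G.deleteEdges {e}) := by
  by_contra! h
  have hle : gammaG' G ≤ 2 := gammaG'_le_two_of_le (G.deleteEdges_le {e}) (by omega)
  omega
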